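/- arXiv:1107.2240 — 2 statements merged into one kernel-verified Lean document; each statement's English description precedes it below -/
import Mathlib

section
/- Let Ω be the path algebra of the quiver with vertices 1,…,p and arrows x_s: s+1 → s, y_s: s → s+1 (for 1 ≤ s ≤ p−1), modulo the relations x₁y₁ = 0 and xy = yx (i.e. x_s y_s = y_{s−1} x_{s−1} for 2 ≤ s ≤ p−1). Then the centre of Ω is isomorphic to F[z]/(z^p), where z = xy = Σ_s y_{s−1}x_{s−1} + x_s y_s interpreted appropriately (the sum of all length-2 cycles). -/
/-!
STATEMENT 6: Let `Ω` be the path algebra of the quiver with vertices `1, …, p` and arrows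
`x_s : s+1 → s`, `y_s : s → s+1` modulo the relations `x₁y₁ = 0` and `xy = yx`.
Then the centre of `Ω` is `F[z]/(z^p)` where `z = xy` is the sum of all length-two cycles:
the algebra map `F[T] → Ω, T ↦ z` has image the centre of `Ω` and kernel `(T^p)`.

We present `Ω` by generators and relations (using `p = m + 3`, so that `p > 2`;
vertices are `Fin (m+3)`, arrow indices are `t : Fin (m+2)`, the arrow `x t` running from
vertex `t.succ` to vertex `t.castSucc` and `y t` the other way).  Products are written in
function-composition order: in `a * b` the path `b` is traversed first, and an arrow
`α : u → v` satisfies `e_v * α * e_u = α`.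
-/

namespace Stmt6

inductive OGen (m : ℕ) : Type
  | e : Fin (m + 3) → OGen m
  | x : Fin (m + 2) → OGen m
  | y : Fin (m + 2) → OGen m

variable (F : Type) [Field F] (m : ℕ)

open FreeAlgebra

abbrev fE (i : Fin (m + 3)) : FreeAlgebra F (OGen m) := ι F (OGen.e i)
abbrev fX (t : Fin (m + 2)) : FreeAlgebra F (OGen m) := ι F (OGen.x t)
abbrev fY (t : Fin (m + 2)) : FreeAlgebra F (OGen m) := ι F (OGen.y t)

/-- The defining relations of `Ω`. -/
inductive OmegaRel : FreeAlgebra F (OGen m) → FreeAlgebra F (OGen m) → Prop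
  /-- the vertex idempotents are orthogonal idempotents -/
  | ee (i j : Fin (m + 3)) :
      OmegaRel (fE F m i * fE F m j) (if i = j then fE F m i else 0)
  /-- the vertex idempotents sum to `1` -/
  | esum : OmegaRel (∑ i : Fin (m + 3), fE F m i) 1
  /-- `x t` is an arrow from vertex `t.succ` to vertex `t.castSucc` -/
  | ex (t : Fin (m + 2)) : OmegaRel (fE F m t.castSucc * fX F m t * fE F m t.succ) (fX F m t)
  /-- `y t` is an arrow from vertex `t.castSucc` to vertex `t.succ` -/
  | ey (t : Fin (m + 2)) : OmegaRel (fE F m t.succ * fY F m t * fE F m t.castSucc) (fY F m t)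
  /-- the relation `x₁ y₁ = 0` (the length-two loop at the first vertex vanishes) -/
  | xy1 : OmegaRel (fX F m 0 * fY F m 0) 0
  /-- the commutation relations `xy = yx` -/
  | comm (t : Fin (m + 1)) :
      OmegaRel (fY F m t.castSucc * fX F m t.castSucc) (fX F m t.succ * fY F m t.succ)

/-- The algebra `Ω`. -/
abbrev Omega := RingQuot (OmegaRel F m)

noncomputable def mkO : FreeAlgebra F (OGen m) →ₐ[F] Omega F m := RingQuot.mkAlgHom F _

noncomputable def eΩ (i : Fin (m + 3)) : Omega F m := mkO F m (fE F m i)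
noncomputable def xΩ (t : Fin (m + 2)) : Omega F m := mkO F m (fX F m t)
noncomputable def yΩ (t : Fin (m + 2)) : Omega F m := mkO F m (fY F m t)

/-- `z = xy`, the sum of all length-two cycles (one based at each vertex; the loop at the
first vertex, which is zero, is omitted from the sum). -/
noncomputable def zΩ : Omega F m := ∑ t : Fin (m + 2), yΩ F m t * xΩ F m t

end Stmt6

/-!
Left multiplication by a generator sends a path `y^a x^b` (down from vertex `w + b` to `w`, then
up to `w + a`) to another such path or to zero: an `x`-arrow slides down past the `y`'s by
`xy = yx` and dies at the first vertex because `x₁y₁ = 0`. Hence these paths span `Ω`. They are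
independent because `Ω` acts on functions of (vertex, height), and a path sends the indicator of
its source at height `0` to the indicator of its target at height `a`; so each coefficient is an
evaluation. The power `z^s` is the sum of the paths with `a = b = s`, so `z^p = 0` while
`1, z, …, z^(p-1)` are independent. A central element commutes with the vertex idempotents, so
only paths with `a = b` occur in it, and commuting it with the `x`-arrows shows that the
coefficient of such a path does not depend on `w`: it is a polynomial in `z`.
-/

def Submodule.mulLeftStabilizer {R A : Type*} [CommSemiring R] [Semiring A] [Algebra R A]
    (N : Submodule R A) : Subalgebra R A where
  carrier := {a | ∀ x ∈ N, a * x ∈ N}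
  mul_mem' ha hb x hx := by rw [mul_assoc]; exact ha _ (hb x hx)
  add_mem' ha hb x hx := by rw [add_mul]; exact add_mem (ha x hx) (hb x hx)
  algebraMap_mem' r x hx := by rw [← Algebra.smul_def]; exact N.smul_mem r hx

theorem Submodule.mem_mulLeftStabilizer_span {R A : Type*} [CommSemiring R] [Semiring A]
    [Algebra R A] {s : Set A} {g : A} (h : ∀ x ∈ s, g * x ∈ span R s) :
    g ∈ (span R s).mulLeftStabilizer :=
  fun _ hx => span_le (p := (span R s).comap (LinearMap.mulLeft R g)).2 h hx

namespace Stmt6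

open Polynomial

variable (F : Type) [Field F] (m : ℕ)

/- The generators indexed by `ℕ` and extended by zero, so that the multiplication rules between
them need no range hypotheses. -/
noncomputable def vtx (i : ℕ) : Omega F m := if h : i < m + 3 then eΩ F m ⟨i, h⟩ else 0
noncomputable def xArr (t : ℕ) : Omega F m := if h : t < m + 2 then xΩ F m ⟨t, h⟩ else 0
noncomputable def yArr (t : ℕ) : Omega F m := if h : t < m + 2 then yΩ F m ⟨t, h⟩ else 0

variable {F m}

theorem mkO_rel {a b : FreeAlgebra F (OGen m)} (h : OmegaRel F m a b) : mkO F m a = mkO F m b :=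
  RingQuot.mkAlgHom_rel F h

theorem eΩ_mul_eΩ (i j : Fin (m + 3)) :
    eΩ F m i * eΩ F m j = if i = j then eΩ F m i else 0 := by
  simpa [eΩ, apply_ite (mkO F m)] using mkO_rel (OmegaRel.ee (F := F) i j)

theorem eΩ_mul_of_sandwich {a : Omega F m} {i j : Fin (m + 3)}
    (h : eΩ F m i * a * eΩ F m j = a) (k : Fin (m + 3)) :
    eΩ F m k * a = if k = i then a else 0 := by
  conv_lhs => rw [← h, ← mul_assoc, ← mul_assoc, eΩ_mul_eΩ]
  split_ifs with hk
  · rw [hk, h]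
  · simp

theorem mul_eΩ_of_sandwich {a : Omega F m} {i j : Fin (m + 3)}
    (h : eΩ F m i * a * eΩ F m j = a) (k : Fin (m + 3)) :
    a * eΩ F m k = if k = j then a else 0 := by
  conv_lhs => rw [← h, mul_assoc, eΩ_mul_eΩ]
  rcases eq_or_ne k j with rfl | hk
  · simp [h]
  · simp [hk, hk.symm]

theorem eΩ_mul_xΩ_mul_eΩ (t : Fin (m + 2)) :
    eΩ F m t.castSucc * xΩ F m t * eΩ F m t.succ = xΩ F m t := by
  simpa [eΩ, xΩ] using mkO_rel (OmegaRel.ex (F := F) t)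

theorem eΩ_mul_yΩ_mul_eΩ (t : Fin (m + 2)) :
    eΩ F m t.succ * yΩ F m t * eΩ F m t.castSucc = yΩ F m t := by
  simpa [eΩ, yΩ] using mkO_rel (OmegaRel.ey (F := F) t)

theorem vtx_mul_vtx (i j : ℕ) : vtx F m i * vtx F m j = if i = j then vtx F m i else 0 := by
  unfold vtx
  split_ifs <;> first | omega | simp_all [eΩ_mul_eΩ, Fin.ext_iff]

theorem sum_vtx : ∑ i ∈ Finset.range (m + 3), vtx F m i = 1 := by
  rw [← Fin.sum_univ_eq_sum_range]
  simpa [vtx, eΩ] using mkO_rel (OmegaRel.esum (F := F) (m := m))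

theorem vtx_mul_xArr (i t : ℕ) : vtx F m i * xArr F m t = if i = t then xArr F m t else 0 := by
  unfold vtx xArr
  split_ifs <;> first | omega | simp_all [eΩ_mul_of_sandwich (eΩ_mul_xΩ_mul_eΩ _), Fin.ext_iff]

theorem xArr_mul_vtx (i t : ℕ) :
    xArr F m t * vtx F m i = if i = t + 1 then xArr F m t else 0 := by
  unfold vtx xArr
  split_ifs <;> simp_all [mul_eΩ_of_sandwich (eΩ_mul_xΩ_mul_eΩ _), Fin.ext_iff]

theorem vtx_mul_yArr (i t : ℕ) :
    vtx F m i * yArr F m t = if i = t + 1 then yArr F m t else 0 := by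
  unfold vtx yArr
  split_ifs <;> simp_all [eΩ_mul_of_sandwich (eΩ_mul_yΩ_mul_eΩ _), Fin.ext_iff]

theorem yArr_mul_vtx (i t : ℕ) : yArr F m t * vtx F m i = if i = t then yArr F m t else 0 := by
  unfold vtx yArr
  split_ifs <;> first | omega | simp_all [mul_eΩ_of_sandwich (eΩ_mul_yΩ_mul_eΩ _), Fin.ext_iff]

theorem xArr_zero_mul_yArr_zero : xArr F m 0 * yArr F m 0 = 0 := by
  simpa [xArr, yArr, xΩ, yΩ] using mkO_rel (OmegaRel.xy1 (F := F) (m := m))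

theorem xArr_succ_mul_yArr_succ {t : ℕ} (ht : t ≤ m) :
    xArr F m (t + 1) * yArr F m (t + 1) = yArr F m t * xArr F m t := by
  have h := mkO_rel (OmegaRel.comm (F := F) (⟨t, by omega⟩ : Fin (m + 1)))
  simp only [map_mul] at h
  simp only [xArr, yArr, dif_pos (show t < m + 2 by omega), dif_pos (show t + 1 < m + 2 by omega)]
  exact h.symm

theorem zΩ_eq_sum : zΩ F m = ∑ t ∈ Finset.range (m + 2), yArr F m t * xArr F m t := by
  simp [zΩ, ← Fin.sum_univ_eq_sum_range, yArr, xArr]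

theorem xArr_eq_zero {t : ℕ} (ht : m + 2 ≤ t) : xArr F m t = 0 := dif_neg (by omega)
theorem yArr_eq_zero {t : ℕ} (ht : m + 2 ≤ t) : yArr F m t = 0 := dif_neg (by omega)
theorem vtx_eq_zero {i : ℕ} (hi : m + 3 ≤ i) : vtx F m i = 0 := dif_neg (by omega)

theorem xArr_mul_vtx_succ (t : ℕ) : xArr F m t * vtx F m (t + 1) = xArr F m t := by
  rw [xArr_mul_vtx, if_pos rfl]

theorem yArr_mul_vtx_self (t : ℕ) : yArr F m t * vtx F m t = yArr F m t := by
  rw [yArr_mul_vtx, if_pos rfl]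

theorem xArr_mul_xArr_of_ne {s t : ℕ} (h : s + 1 ≠ t) : xArr F m s * xArr F m t = 0 := by
  rw [← xArr_mul_vtx_succ, mul_assoc, vtx_mul_xArr, if_neg h, mul_zero]

/-! ### Paths -/

variable (F m)

noncomputable def yPath (w : ℕ) : ℕ → Omega F m
  | 0 => vtx F m w
  | a + 1 => yArr F m (w + a) * yPath w a

noncomputable def xPath (w : ℕ) : ℕ → Omega F m
  | 0 => vtx F m w
  | b + 1 => xPath w b * xArr F m (w + b)

/-- `path w a b` runs down from vertex `w + b` to `w` along `x`-arrows, then up to `w + a` along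
`y`-arrows. Those with `w + a, w + b ≤ m + 2` form a basis of `Ω`; the others vanish. -/
noncomputable def path (w a b : ℕ) : Omega F m := yPath F m w a * xPath F m w b

variable {F m}

theorem vtx_mul_yPath (i w a : ℕ) :
    vtx F m i * yPath F m w a = if i = w + a then yPath F m w a else 0 := by
  induction a with
  | zero =>
    rw [yPath, vtx_mul_vtx, add_zero]
    split_ifs with h
    · rw [h]
    · rfl
  | succ a ih =>
    rw [yPath, ← mul_assoc, vtx_mul_yArr]
    split_ifs <;> first | omega | simp

theorem yArr_mul_yPath (t w a : ℕ) :
    yArr F m t * yPath F m w a = if t = w + a then yPath F m w (a + 1) else 0 := by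
  split_ifs with h
  · rw [yPath, h]
  · rw [← yArr_mul_vtx_self, mul_assoc, vtx_mul_yPath, if_neg h, mul_zero]

theorem xPath_mul_vtx (i w b : ℕ) :
    xPath F m w b * vtx F m i = if i = w + b then xPath F m w b else 0 := by
  induction b with
  | zero => simp [xPath, vtx_mul_vtx, eq_comm]
  | succ b ih =>
    rw [xPath, mul_assoc, xArr_mul_vtx]
    split_ifs <;> first | omega | simp

theorem xArr_mul_xPath (w b : ℕ) : xArr F m w * xPath F m (w + 1) b = xPath F m w (b + 1) := by
  induction b with
  | zero => simp [xPath, xArr_mul_vtx, vtx_mul_xArr]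
  | succ b ih => rw [xPath, ← mul_assoc, ih, show w + 1 + b = w + (b + 1) by omega]; rfl

theorem xArr_mul_yPath {w a : ℕ} (h : w + a ≤ m + 1) :
    xArr F m (w + a) * yPath F m (w + 1) a = yPath F m w a * xArr F m w := by
  induction a with
  | zero => simp [yPath, xArr_mul_vtx, vtx_mul_xArr]
  | succ a ih =>
    rw [yPath, yPath, ← mul_assoc, show w + 1 + a = w + a + 1 by omega, ← add_assoc,
      xArr_succ_mul_yArr_succ (by omega : w + a ≤ m), mul_assoc, ih (by omega), mul_assoc]

theorem xArr_mul_yPath_zero (t : ℕ) : xArr F m t * yPath F m 0 (t + 1) = 0 := by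
  induction t with
  | zero => simp [yPath, ← mul_assoc, xArr_zero_mul_yArr_zero]
  | succ t ih =>
    rcases le_or_gt t m with ht | ht
    · rw [yPath, ← mul_assoc, zero_add, xArr_succ_mul_yArr_succ ht, mul_assoc, ih, mul_zero]
    · rw [xArr_eq_zero (by omega), zero_mul]

theorem vtx_mul_path (i w a b : ℕ) :
    vtx F m i * path F m w a b = if i = w + a then path F m w a b else 0 := by
  rw [path, ← mul_assoc, vtx_mul_yPath]
  split_ifs <;> simp

theorem path_mul_vtx (i w a b : ℕ) :
    path F m w a b * vtx F m i = if i = w + b then path F m w a b else 0 := by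
  rw [path, mul_assoc, xPath_mul_vtx]
  split_ifs <;> simp

theorem path_eq_zero_of_left {w a b : ℕ} (h : m + 3 ≤ w + a) : path F m w a b = 0 := by
  have h' := vtx_mul_path (F := F) (m := m) (w + a) w a b
  rwa [if_pos rfl, vtx_eq_zero h, zero_mul, eq_comm] at h'

theorem path_eq_zero_of_right {w a b : ℕ} (h : m + 3 ≤ w + b) : path F m w a b = 0 := by
  have h' := path_mul_vtx (F := F) (m := m) (w + b) w a b
  rwa [if_pos rfl, vtx_eq_zero h, mul_zero, eq_comm] at h'

theorem path_eq_zero_of_not_le {w a b : ℕ} (h : ¬ (w + a ≤ m + 2 ∧ w + b ≤ m + 2)) :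
    path F m w a b = 0 := by
  rcases not_and_or.1 h with h | h
  exacts [path_eq_zero_of_left (by omega), path_eq_zero_of_right (by omega)]

theorem yArr_mul_path (t w a b : ℕ) :
    yArr F m t * path F m w a b = if t = w + a then path F m w (a + 1) b else 0 := by
  rw [path, ← mul_assoc, yArr_mul_yPath]
  split_ifs <;> simp [path]

theorem xArr_mul_path_of_ne {t w a b : ℕ} (h : t + 1 ≠ w + a) :
    xArr F m t * path F m w a b = 0 := by
  rw [← xArr_mul_vtx_succ, mul_assoc, vtx_mul_path, if_neg h, mul_zero]

theorem xArr_mul_path_succ {w a : ℕ} (b : ℕ) (h : w + a ≤ m + 1) :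
    xArr F m (w + a) * path F m (w + 1) a b = path F m w a (b + 1) := by
  rw [path, ← mul_assoc, xArr_mul_yPath h, mul_assoc, xArr_mul_xPath, path]

theorem xArr_mul_path_zero (t a b : ℕ) : xArr F m t * path F m 0 a b = 0 := by
  rcases eq_or_ne (t + 1) a with rfl | h
  · rw [path, ← mul_assoc, xArr_mul_yPath_zero, zero_mul]
  · exact xArr_mul_path_of_ne (by omega)

theorem zΩ_mul_path_zero (a b : ℕ) : zΩ F m * path F m 0 a b = 0 := by
  simp [zΩ_eq_sum, Finset.sum_mul, mul_assoc, xArr_mul_path_zero]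

theorem zΩ_mul_path_succ (w a b : ℕ) :
    zΩ F m * path F m (w + 1) a b = path F m w (a + 1) (b + 1) := by
  rcases le_or_gt (w + a) (m + 1) with h | h
  · rw [zΩ_eq_sum, Finset.sum_mul, Finset.sum_eq_single (w + a)]
    · rw [mul_assoc, xArr_mul_path_succ b h, yArr_mul_path, if_pos rfl]
    · intro t _ ht
      rw [mul_assoc, xArr_mul_path_of_ne (by omega), mul_zero]
    · intro hwa
      exact absurd (Finset.mem_range.2 (by omega)) hwa
  · rw [path_eq_zero_of_left (by omega), mul_zero, path, yPath, yArr_eq_zero (by omega),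
      zero_mul, zero_mul]

theorem zΩ_pow (s : ℕ) : zΩ F m ^ s = ∑ w ∈ Finset.range (m + 3), path F m w s s := by
  induction s with
  | zero => simp [path, yPath, xPath, vtx_mul_vtx, sum_vtx]
  | succ s ih =>
    rw [pow_succ', ih, Finset.mul_sum, Finset.sum_range_succ', zΩ_mul_path_zero, add_zero,
      Finset.sum_range_succ _ (m + 2), path_eq_zero_of_left (by omega), add_zero]
    simp only [zΩ_mul_path_succ]

theorem zΩ_pow_eq_zero : zΩ F m ^ (m + 3) = 0 := by
  rw [zΩ_pow]
  exact Finset.sum_eq_zero fun w _ => path_eq_zero_of_left (by omega)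

/-! ### Centrality of `z` -/

theorem xArr_mul_yArr_of_ne {s t : ℕ} (h : s ≠ t) : xArr F m s * yArr F m t = 0 := by
  rw [← xArr_mul_vtx_succ, mul_assoc, vtx_mul_yArr, if_neg (by omega), mul_zero]

theorem yArr_mul_yArr_of_ne {s t : ℕ} (h : s ≠ t + 1) : yArr F m s * yArr F m t = 0 := by
  rw [← yArr_mul_vtx_self, mul_assoc, vtx_mul_yArr, if_neg h, mul_zero]

theorem zΩ_mul_vtx (i : ℕ) : zΩ F m * vtx F m i = vtx F m i * zΩ F m := by
  simp only [zΩ_eq_sum, Finset.sum_mul, Finset.mul_sum]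
  refine Finset.sum_congr rfl fun t _ => ?_
  rw [mul_assoc, xArr_mul_vtx, ← mul_assoc, vtx_mul_yArr]
  split_ifs <;> simp

theorem xArr_mul_zΩ (t : ℕ) : xArr F m t * zΩ F m = xArr F m t * yArr F m t * xArr F m t := by
  rcases lt_or_ge t (m + 2) with ht | ht
  · rw [zΩ_eq_sum, Finset.mul_sum, Finset.sum_eq_single_of_mem t (Finset.mem_range.2 ht),
      mul_assoc]
    intro s _ hs
    rw [← mul_assoc, xArr_mul_yArr_of_ne (Ne.symm hs), zero_mul]
  · simp [xArr_eq_zero ht]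

theorem zΩ_mul_xArr (t : ℕ) : zΩ F m * xArr F m t = xArr F m t * yArr F m t * xArr F m t := by
  rw [zΩ_eq_sum, Finset.sum_mul]
  cases t with
  | zero =>
    rw [xArr_zero_mul_yArr_zero, zero_mul]
    exact Finset.sum_eq_zero fun s _ => by
      rw [mul_assoc, xArr_mul_xArr_of_ne (by omega), mul_zero]
  | succ t =>
    rcases le_or_gt t m with ht | ht
    · rw [Finset.sum_eq_single_of_mem t (Finset.mem_range.2 (by omega)),
        xArr_succ_mul_yArr_succ ht]
      intro s _ hs
      rw [mul_assoc, xArr_mul_xArr_of_ne (by omega), mul_zero]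
    · simp [xArr_eq_zero (show m + 2 ≤ t + 1 by omega)]

theorem zΩ_mul_yArr (t : ℕ) : zΩ F m * yArr F m t = yArr F m t * xArr F m t * yArr F m t := by
  rcases lt_or_ge t (m + 2) with ht | ht
  · rw [zΩ_eq_sum, Finset.sum_mul, Finset.sum_eq_single_of_mem t (Finset.mem_range.2 ht)]
    intro s _ hs
    rw [mul_assoc, xArr_mul_yArr_of_ne hs, mul_zero]
  · simp [yArr_eq_zero ht]

theorem yArr_mul_zΩ (t : ℕ) : yArr F m t * zΩ F m = yArr F m t * xArr F m t * yArr F m t := by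
  rw [zΩ_eq_sum, Finset.mul_sum]
  cases t with
  | zero =>
    rw [mul_assoc, xArr_zero_mul_yArr_zero, mul_zero]
    exact Finset.sum_eq_zero fun s _ => by
      rw [← mul_assoc, yArr_mul_yArr_of_ne (by omega), zero_mul]
  | succ t =>
    rcases le_or_gt t m with ht | ht
    · rw [Finset.sum_eq_single_of_mem t (Finset.mem_range.2 (by omega)), mul_assoc,
        xArr_succ_mul_yArr_succ ht]
      intro s _ hs
      rw [← mul_assoc, yArr_mul_yArr_of_ne (by omega), zero_mul]
    · simp [yArr_eq_zero (show m + 2 ≤ t + 1 by omega)]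

theorem adjoin_range_mkO_ι :
    Algebra.adjoin F (Set.range fun g : OGen m => mkO F m (FreeAlgebra.ι F g)) = ⊤ := by
  rw [← Function.comp_def, Set.range_comp, Algebra.adjoin_image, FreeAlgebra.adjoin_range_ι,
    Algebra.map_top, AlgHom.range_eq_top]
  exact RingQuot.mkAlgHom_surjective F (OmegaRel F m)

theorem subalgebra_eq_top_of_generators_mem {S : Subalgebra F (Omega F m)}
    (he : ∀ i, vtx F m i ∈ S) (hx : ∀ t, xArr F m t ∈ S) (hy : ∀ t, yArr F m t ∈ S) : S = ⊤ := by
  rw [eq_top_iff, ← adjoin_range_mkO_ι, Algebra.adjoin_le_iff]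
  rintro _ ⟨g, rfl⟩
  cases g with
  | e i => simpa [vtx, eΩ] using he i
  | x t => simpa [xArr, xΩ] using hx t
  | y t => simpa [yArr, yΩ] using hy t

theorem zΩ_mem_center : zΩ F m ∈ Subalgebra.center F (Omega F m) := by
  have h : Subalgebra.centralizer F {zΩ F m} = ⊤ := by
    refine subalgebra_eq_top_of_generators_mem (fun i => ?_) (fun t => ?_) (fun t => ?_) <;>
      simp only [Subalgebra.mem_centralizer_iff, Set.mem_singleton_iff, forall_eq]
    · exact zΩ_mul_vtx i
    · exact (zΩ_mul_xArr t).trans (xArr_mul_zΩ t).symm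
    · exact (zΩ_mul_yArr t).trans (yArr_mul_zΩ t).symm
  rw [Subalgebra.mem_center_iff]
  intro a
  have ha : a ∈ Subalgebra.centralizer F {zΩ F m} := h ▸ Algebra.mem_top
  exact ((Subalgebra.mem_centralizer_iff F).1 ha _ rfl).symm

/-! ### The paths span `Ω` -/

variable (F m) in
noncomputable def pathSpan : Submodule F (Omega F m) :=
  Submodule.span F (Set.range fun j : ℕ × ℕ × ℕ => path F m j.1 j.2.1 j.2.2)

theorem path_mem_pathSpan (w a b : ℕ) : path F m w a b ∈ pathSpan F m :=
  Submodule.subset_span ⟨(w, a, b), rfl⟩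

theorem ite_path_mem_pathSpan (p : Prop) [Decidable p] (w a b : ℕ) :
    (if p then path F m w a b else 0) ∈ pathSpan F m := by
  split_ifs
  exacts [path_mem_pathSpan w a b, zero_mem _]

theorem xArr_mul_path_mem (t w a b : ℕ) : xArr F m t * path F m w a b ∈ pathSpan F m := by
  cases w with
  | zero => simp [xArr_mul_path_zero]
  | succ w =>
    by_cases ht : t = w + a
    · rcases le_or_gt (w + a) (m + 1) with h | h
      · rw [ht, xArr_mul_path_succ b h]
        exact path_mem_pathSpan _ _ _
      · simp [xArr_eq_zero (show m + 2 ≤ t by omega)]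
    · simp [xArr_mul_path_of_ne (show t + 1 ≠ w + 1 + a by omega)]

theorem mem_pathSpan (ω : Omega F m) : ω ∈ pathSpan F m := by
  have h : (pathSpan F m).mulLeftStabilizer = ⊤ := by
    refine subalgebra_eq_top_of_generators_mem (fun i => ?_) (fun t => ?_) (fun t => ?_) <;>
      refine Submodule.mem_mulLeftStabilizer_span (Set.forall_mem_range.2 fun ⟨w, a, b⟩ => ?_)
    · rw [vtx_mul_path]; exact ite_path_mem_pathSpan _ _ _ _
    · exact xArr_mul_path_mem t w a b
    · rw [yArr_mul_path]; exact ite_path_mem_pathSpan _ _ _ _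
  have h1 : (1 : Omega F m) ∈ pathSpan F m := by
    rw [← sum_vtx]
    exact Submodule.sum_mem _ fun i _ => by
      simpa [path, yPath, xPath, vtx_mul_vtx] using path_mem_pathSpan (F := F) (m := m) i 0 0
  have hω : ω ∈ (pathSpan F m).mulLeftStabilizer := h ▸ Algebra.mem_top
  simpa using hω 1 h1

/-! ### Path coefficients -/

/- `Ω` acts on functions of a state `(vertex, height)`: an `x`-arrow lowers the vertex, a
`y`-arrow raises both vertex and height, and the height never exceeds the vertex. Applied to the
indicator of `(w + b, 0)`, `path w a b` gives the indicator of `(w + a, a)`, so evaluating there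
reads off coefficients in the path basis. -/
variable (m) in
abbrev State := Fin (m + 3) × ℕ

variable (F m) in
noncomputable def evalAt (a k : ℕ) : (State m → F) →ₗ[F] F :=
  if h : a < m + 3 then LinearMap.proj (⟨a, h⟩, k) else 0

theorem evalAt_apply (a k : ℕ) (f : State m → F) :
    evalAt F m a k f = if h : a < m + 3 then f (⟨a, h⟩, k) else 0 := by
  unfold evalAt
  split_ifs <;> rfl

variable (F m) in
noncomputable def vtxOp (i : ℕ) : Module.End F (State m → F) :=
  LinearMap.pi fun q => if (q.1 : ℕ) = i then LinearMap.proj q else 0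

variable (F m) in
noncomputable def xOp (t : ℕ) : Module.End F (State m → F) :=
  LinearMap.pi fun q => if (q.1 : ℕ) = t ∧ q.2 ≤ t then evalAt F m (t + 1) q.2 else 0

variable (F m) in
noncomputable def yOp (t : ℕ) : Module.End F (State m → F) :=
  LinearMap.pi fun q => if (q.1 : ℕ) = t + 1 ∧ 1 ≤ q.2 then evalAt F m t (q.2 - 1) else 0

theorem vtxOp_apply (i : ℕ) (f : State m → F) (q : State m) :
    vtxOp F m i f q = if (q.1 : ℕ) = i then f q else 0 := by
  simp only [vtxOp, LinearMap.pi_apply]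
  split_ifs <;> rfl

theorem xOp_apply (t : ℕ) (f : State m → F) (q : State m) :
    xOp F m t f q = if (q.1 : ℕ) = t ∧ q.2 ≤ t then evalAt F m (t + 1) q.2 f else 0 := by
  simp only [xOp, LinearMap.pi_apply]
  split_ifs <;> rfl

theorem yOp_apply (t : ℕ) (f : State m → F) (q : State m) :
    yOp F m t f q = if (q.1 : ℕ) = t + 1 ∧ 1 ≤ q.2 then evalAt F m t (q.2 - 1) f else 0 := by
  simp only [yOp, LinearMap.pi_apply]
  split_ifs <;> rfl

variable (F m) in
noncomputable def genOp : OGen m → Module.End F (State m → F)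
  | .e i => vtxOp F m i
  | .x t => xOp F m t
  | .y t => yOp F m t

theorem genOp_rel ⦃a b : FreeAlgebra F (OGen m)⦄ (h : OmegaRel F m a b) :
    FreeAlgebra.lift F (genOp F m) a = FreeAlgebra.lift F (genOp F m) b := by
  induction h <;> refine LinearMap.ext fun f => funext fun q => ?_
  case esum => simp [genOp, vtxOp_apply, Fin.val_inj]
  all_goals
    simp only [map_mul, map_zero, apply_ite, FreeAlgebra.lift_ι_apply, genOp,
      Module.End.mul_apply, vtxOp_apply, xOp_apply, yOp_apply, evalAt_apply,
      LinearMap.zero_apply, Pi.zero_apply, Fin.val_castSucc, Fin.val_succ, Fin.val_inj,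
      Fin.val_zero]
    split_ifs <;> first | rfl | omega | simp_all [vtxOp_apply, Fin.val_inj]

variable (F m) in
noncomputable def rho : Omega F m →ₐ[F] Module.End F (State m → F) :=
  RingQuot.liftAlgHom F ⟨FreeAlgebra.lift F (genOp F m), genOp_rel⟩

theorem rho_mkO_ι (g : OGen m) : rho F m (mkO F m (FreeAlgebra.ι F g)) = genOp F m g := by
  simp [rho, mkO]

theorem rho_vtx (i : ℕ) : rho F m (vtx F m i) = vtxOp F m i := by
  unfold vtx
  split_ifs with h
  · exact rho_mkO_ι (.e _)
  · refine LinearMap.ext fun f => funext fun q => ?_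
    simp [vtxOp_apply, show (q.1 : ℕ) ≠ i by omega]

theorem rho_xArr (t : ℕ) : rho F m (xArr F m t) = xOp F m t := by
  unfold xArr
  split_ifs with h
  · exact rho_mkO_ι (.x _)
  · refine LinearMap.ext fun f => funext fun q => ?_
    simp only [map_zero, xOp_apply, evalAt_apply, LinearMap.zero_apply, Pi.zero_apply]
    split_ifs <;> first | rfl | omega

theorem rho_yArr (t : ℕ) : rho F m (yArr F m t) = yOp F m t := by
  unfold yArr
  split_ifs with h
  · exact rho_mkO_ι (.y _)
  · refine LinearMap.ext fun f => funext fun q => ?_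
    simp [yOp_apply, show (q.1 : ℕ) ≠ t + 1 by omega]

variable (m) in
def unitVec (a k : ℕ) : State m → F := fun q => if (q.1 : ℕ) = a ∧ q.2 = k then 1 else 0

theorem evalAt_unitVec (a k a' k' : ℕ) :
    evalAt F m a k (unitVec m a' k') = if a = a' ∧ k = k' ∧ a < m + 3 then 1 else 0 := by
  simp only [evalAt_apply, unitVec]
  split_ifs <;> first | rfl | omega

theorem vtxOp_unitVec (i a k : ℕ) :
    vtxOp F m i (unitVec m a k) = if i = a then unitVec m a k else 0 := by
  funext q
  simp only [vtxOp_apply, unitVec, ite_apply, Pi.zero_apply]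
  split_ifs <;> first | rfl | omega

theorem xOp_unitVec (t a k : ℕ) :
    xOp F m t (unitVec m a k) =
      if a = t + 1 ∧ k ≤ t ∧ a < m + 3 then unitVec m t k else 0 := by
  funext q
  have := q.1.isLt
  simp only [xOp_apply, evalAt_unitVec, unitVec, ite_apply, Pi.zero_apply]
  split_ifs <;> first | rfl | omega

theorem yOp_unitVec (t a k : ℕ) :
    yOp F m t (unitVec m a k) = if a = t then unitVec m (t + 1) (k + 1) else 0 := by
  funext q
  have := q.1.isLt
  simp only [yOp_apply, evalAt_unitVec, unitVec, ite_apply, Pi.zero_apply]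
  split_ifs <;> first | rfl | omega

theorem evalAt_vtxOp (a k i : ℕ) (f : State m → F) :
    evalAt F m a k (vtxOp F m i f) = if a = i then evalAt F m a k f else 0 := by
  simp only [evalAt_apply, vtxOp_apply]
  split_ifs <;> rfl

theorem evalAt_xOp (a k t : ℕ) (f : State m → F) :
    evalAt F m a k (xOp F m t f) = if a = t ∧ k ≤ t then evalAt F m (t + 1) k f else 0 := by
  simp only [evalAt_apply, xOp_apply]
  split_ifs <;> first | rfl | omega

theorem rho_yPath_unitVec (v w a k : ℕ) :
    rho F m (yPath F m w a) (unitVec m v k) =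
      if v = w then unitVec m (w + a) (k + a) else 0 := by
  induction a with
  | zero => rcases eq_or_ne v w with rfl | h <;> simp [yPath, rho_vtx, vtxOp_unitVec, *, Ne.symm]
  | succ a ih =>
    rw [yPath, map_mul, Module.End.mul_apply, ih, rho_yArr]
    split_ifs <;> simp [yOp_unitVec, ← add_assoc]

theorem rho_xPath_unitVec {u : ℕ} (w b : ℕ) (hu : u < m + 3) :
    rho F m (xPath F m w b) (unitVec m u 0) = if u = w + b then unitVec m w 0 else 0 := by
  induction b generalizing u with
  | zero => rcases eq_or_ne u w with rfl | h <;> simp [xPath, rho_vtx, vtxOp_unitVec, *, Ne.symm]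
  | succ b ih =>
    rw [xPath, map_mul, Module.End.mul_apply, rho_xArr, xOp_unitVec]
    by_cases h : u = w + b + 1
    · rw [if_pos ⟨h, by omega, hu⟩, ih (by omega), if_pos rfl, if_pos (by omega)]
    · rw [if_neg (fun h' => h h'.1), map_zero, if_neg (by omega)]

theorem rho_path_unitVec {u : ℕ} (w a b : ℕ) (hu : u < m + 3) :
    rho F m (path F m w a b) (unitVec m u 0) =
      if u = w + b then unitVec m (w + a) a else 0 := by
  rw [path, map_mul, Module.End.mul_apply, rho_xPath_unitVec w b hu]
  split_ifs <;> simp [rho_yPath_unitVec]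

variable (F m) in
/-- The coefficient of `path w a b` in the path basis of `Ω`. -/
noncomputable def pathCoeff (w a b : ℕ) : Omega F m →ₗ[F] F :=
  evalAt F m (w + a) a ∘ₗ LinearMap.applyₗ (unitVec m (w + b) 0) ∘ₗ (rho F m).toLinearMap

theorem pathCoeff_apply (w a b : ℕ) (ω : Omega F m) :
    pathCoeff F m w a b ω = evalAt F m (w + a) a (rho F m ω (unitVec m (w + b) 0)) := rfl

theorem pathCoeff_path {w a b : ℕ} (ha : w + a ≤ m + 2) (hb : w + b ≤ m + 2) (w' a' b' : ℕ) :
    pathCoeff F m w a b (path F m w' a' b') = if (w', a', b') = (w, a, b) then 1 else 0 := by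
  rw [pathCoeff_apply, rho_path_unitVec w' a' b' (by omega)]
  simp only [apply_ite, evalAt_unitVec, map_zero, Prod.mk.injEq]
  split_ifs <;> first | rfl | omega

theorem pathCoeff_vtx_mul (w a b i : ℕ) (ω : Omega F m) :
    pathCoeff F m w a b (vtx F m i * ω) = if i = w + a then pathCoeff F m w a b ω else 0 := by
  rw [pathCoeff_apply, pathCoeff_apply, map_mul, Module.End.mul_apply, rho_vtx, evalAt_vtxOp]
  split_ifs <;> first | rfl | omega

theorem pathCoeff_mul_vtx (w a b i : ℕ) (ω : Omega F m) :
    pathCoeff F m w a b (ω * vtx F m i) = if i = w + b then pathCoeff F m w a b ω else 0 := by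
  rw [pathCoeff_apply, pathCoeff_apply, map_mul, Module.End.mul_apply, rho_vtx, vtxOp_unitVec]
  split_ifs <;> simp

theorem pathCoeff_xArr_mul (w a b : ℕ) (ω : Omega F m) :
    pathCoeff F m w a (b + 1) (xArr F m (w + a) * ω) = pathCoeff F m (w + 1) a b ω := by
  rw [pathCoeff_apply, pathCoeff_apply, map_mul, Module.End.mul_apply, rho_xArr, evalAt_xOp,
    if_pos ⟨rfl, by omega⟩]
  simp only [add_right_comm w 1, ← add_assoc]

theorem pathCoeff_mul_xArr {w b : ℕ} (a : ℕ) (h : w + b ≤ m + 1) (ω : Omega F m) :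
    pathCoeff F m w a (b + 1) (ω * xArr F m (w + b)) = pathCoeff F m w a b ω := by
  rw [pathCoeff_apply, pathCoeff_apply, map_mul, Module.End.mul_apply, rho_xArr, xOp_unitVec,
    if_pos ⟨by omega, by omega, by omega⟩]

variable (m) in
abbrev indexBox : Finset (ℕ × ℕ × ℕ) :=
  Finset.range (m + 3) ×ˢ Finset.range (m + 3) ×ˢ Finset.range (m + 3)

theorem path_eq_zero_of_not_mem_indexBox {j : ℕ × ℕ × ℕ} (hj : j ∉ indexBox m) :
    path F m j.1 j.2.1 j.2.2 = 0 := by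
  simp only [Finset.mem_product, Finset.mem_range] at hj
  exact path_eq_zero_of_not_le (by omega)

theorem pathCoeff_smul_path_eq_ite (w a b w' a' b' : ℕ) :
    pathCoeff F m w a b (path F m w' a' b') • path F m w a b =
      if (w', a', b') = (w, a, b) then path F m w' a' b' else 0 := by
  by_cases hj : w + a ≤ m + 2 ∧ w + b ≤ m + 2
  · rw [pathCoeff_path hj.1 hj.2]
    split_ifs with h
    · simp_all
    · simp
  · rw [path_eq_zero_of_not_le hj, smul_zero]
    split_ifs with h
    · simp only [Prod.mk.injEq] at h
      obtain ⟨rfl, rfl, rfl⟩ := h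
      exact (path_eq_zero_of_not_le hj).symm
    · rfl

theorem eq_sum_pathCoeff_smul_path (ω : Omega F m) :
    ω = ∑ j ∈ indexBox m, pathCoeff F m j.1 j.2.1 j.2.2 ω • path F m j.1 j.2.1 j.2.2 := by
  induction mem_pathSpan ω using Submodule.span_induction with
  | mem _ hp =>
    obtain ⟨i, rfl⟩ := hp
    simp_rw [pathCoeff_smul_path_eq_ite _ _ _ i.1 i.2.1 i.2.2, Prod.mk.eta, Finset.sum_ite_eq]
    split_ifs with hi
    · rfl
    · exact path_eq_zero_of_not_mem_indexBox hi
  | zero => simp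
  | add x y _ _ hx hy =>
    simp only [map_add, add_smul, Finset.sum_add_distrib]
    rw [← hx, ← hy]
  | smul r x _ hx =>
    simp only [map_smul, smul_eq_mul, mul_smul, ← Finset.smul_sum]
    rw [← hx]

theorem ext_pathCoeff {α β : Omega F m}
    (h : ∀ w a b, w + a ≤ m + 2 → w + b ≤ m + 2 →
      pathCoeff F m w a b α = pathCoeff F m w a b β) :
    α = β := by
  rw [eq_sum_pathCoeff_smul_path α, eq_sum_pathCoeff_smul_path β]
  refine Finset.sum_congr rfl fun j _ => ?_
  by_cases hj : j.1 + j.2.1 ≤ m + 2 ∧ j.1 + j.2.2 ≤ m + 2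
  · rw [h _ _ _ hj.1 hj.2]
  · rw [path_eq_zero_of_not_le hj, smul_zero, smul_zero]

theorem pathCoeff_zΩ_pow {w a b : ℕ} (ha : w + a ≤ m + 2) (hb : w + b ≤ m + 2) (s : ℕ) :
    pathCoeff F m w a b (zΩ F m ^ s) = if s = a ∧ s = b then 1 else 0 := by
  rw [zΩ_pow, map_sum]
  simp only [pathCoeff_path ha hb, Prod.mk.injEq, ite_and]
  rw [Finset.sum_ite_eq', if_pos (Finset.mem_range.2 (by omega))]

theorem pathCoeff_aeval_zΩ {w a b : ℕ} (ha : w + a ≤ m + 2) (hb : w + b ≤ m + 2) (q : F[X]) :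
    pathCoeff F m w a b (aeval (zΩ F m) q) = if a = b then q.coeff a else 0 := by
  induction q using Polynomial.induction_on' with
  | add p q hp hq =>
    simp only [map_add, hp, hq, Polynomial.coeff_add]
    split_ifs <;> simp
  | monomial n c =>
    rw [aeval_monomial, ← Algebra.smul_def, map_smul, pathCoeff_zΩ_pow ha hb, coeff_monomial]
    split_ifs <;> first | (exfalso; omega) | simp

theorem ker_aeval_zΩ :
    RingHom.ker ((aeval (zΩ F m)).toRingHom : F[X] →+* Omega F m) =
      Ideal.span {X ^ (m + 3)} := by
  ext q
  rw [RingHom.mem_ker, Ideal.mem_span_singleton]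
  constructor
  · intro hq
    refine X_pow_dvd_iff.2 fun d hd => ?_
    have h := pathCoeff_aeval_zΩ (F := F) (m := m) (w := 0) (a := d) (b := d)
      (by omega) (by omega) q
    rwa [if_pos rfl, show aeval (zΩ F m) q = 0 from hq, map_zero, eq_comm] at h
  · rintro ⟨r, rfl⟩
    simp [zΩ_pow_eq_zero]

/-! ### The centre -/

theorem pathCoeff_eq_zero_of_mem_center {ω : Omega F m}
    (hω : ω ∈ Subalgebra.center F (Omega F m)) {w a b : ℕ} (hab : a ≠ b) :
    pathCoeff F m w a b ω = 0 := by
  have h := pathCoeff_mul_vtx (F := F) w a b (w + b) ω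
  rw [if_pos rfl, ← Subalgebra.mem_center_iff.1 hω, pathCoeff_vtx_mul, if_neg (by omega)] at h
  exact h.symm

theorem pathCoeff_succ_eq_of_mem_center {ω : Omega F m}
    (hω : ω ∈ Subalgebra.center F (Omega F m)) {w s : ℕ} (h : w + s ≤ m + 1) :
    pathCoeff F m (w + 1) s s ω = pathCoeff F m w s s ω := by
  rw [← pathCoeff_xArr_mul, Subalgebra.mem_center_iff.1 hω, pathCoeff_mul_xArr s h]

theorem pathCoeff_eq_pathCoeff_zero_of_mem_center {ω : Omega F m}
    (hω : ω ∈ Subalgebra.center F (Omega F m)) {w s : ℕ} (h : w + s ≤ m + 2) :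
    pathCoeff F m w s s ω = pathCoeff F m 0 s s ω := by
  induction w with
  | zero => rfl
  | succ w ih => rw [pathCoeff_succ_eq_of_mem_center hω (by omega), ih (by omega)]

theorem center_le_range_aeval_zΩ :
    Subalgebra.center F (Omega F m) ≤ (aeval (zΩ F m)).range := by
  intro ω hω
  refine ⟨∑ s ∈ Finset.range (m + 3), monomial s (pathCoeff F m 0 s s ω),
    ext_pathCoeff fun w a b ha hb => ?_⟩
  rw [AlgHom.toRingHom_eq_coe, RingHom.coe_coe, pathCoeff_aeval_zΩ ha hb, finsetSum_coeff]
  split_ifs with hab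
  · subst hab
    simp [coeff_monomial, pathCoeff_eq_pathCoeff_zero_of_mem_center hω ha,
      show a < m + 3 by omega]
  · exact (pathCoeff_eq_zero_of_mem_center hω hab).symm

theorem range_aeval_zΩ : (aeval (zΩ F m)).range = Subalgebra.center F (Omega F m) := by
  refine le_antisymm ?_ center_le_range_aeval_zΩ
  rw [← Algebra.adjoin_singleton_eq_range_aeval]
  exact Algebra.adjoin_le (Set.singleton_subset_iff.2 zΩ_mem_center)

end Stmt6

open Stmt6 in
theorem stmt6_general (F : Type) [Field F] (p m : ℕ) (hpm : p = m + 3) :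
    RingHom.ker ((Polynomial.aeval (zΩ F m)).toRingHom : Polynomial F →+* Omega F m)
      = Ideal.span {Polynomial.X ^ p} ∧
    (Polynomial.aeval (zΩ F m)).range = Subalgebra.center F (Omega F m) := by
  subst hpm
  exact ⟨ker_aeval_zΩ, range_aeval_zΩ⟩

open Stmt6 in
theorem stmt6 (F : Type) [Field F] [IsAlgClosed F] (p m : ℕ) (hpm : p = m + 3)
    [Fact (Nat.Prime p)] [CharP F p] :
    RingHom.ker ((Polynomial.aeval (zΩ F m)).toRingHom : Polynomial F →+* Omega F m)
      = Ideal.span {Polynomial.X ^ p} ∧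
    (Polynomial.aeval (zΩ F m)).range = Subalgebra.center F (Omega F m) :=
  stmt6_general F p m hpm
end

section
/- Let c be the path algebra of the quiver with vertices 1,…,p and arrows η_s: s → s+1, ξ_s: s+1 → s modulo the ideal generated by η_{p−1}ξ_{p−1}, ξ_{m+1}ξ_m, η_mη_{m+1}, and ξ_mη_m + η_{m+1}ξ_{m+1} for 1 ≤ m ≤ p−2. Then the centre of c equals F·1 ⊕ c², where c² is the span of all paths of length 2. -/
/-!
STATEMENT 7: Let `c` be the path algebra of the quiver with vertices `1, …, p` and arrows
`η_s : s → s+1`, `ξ_s : s+1 → s` modulo the ideal generated by `η_{p−1}ξ_{p−1}`,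
`ξ_{m+1}ξ_m`, `η_mη_{m+1}` and `ξ_mη_m + η_{m+1}ξ_{m+1}` (`1 ≤ m ≤ p−2`).
Then the centre of `c` is `F·1 ⊕ c²`, where `c²` is the span of the paths of length two.

We present `c` by generators and relations, with `p = n + 3` (so `p > 2`); vertices are
`Fin (n+3)` and arrow indices `t : Fin (n+2)`, with `η t` running from `t.castSucc` to
`t.succ` and `ξ t` the other way.  Products are written in function-composition order, so the
ideal generators above become (with `u = t + 1`): `ξ_u η_u` at the top vertex, `ξ_t ξ_u`,
`η_u η_t`, and `η_t ξ_t + ξ_u η_u`.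
-/

namespace Stmt7

inductive CGen (n : ℕ) : Type
  | e : Fin (n + 3) → CGen n
  | h : Fin (n + 2) → CGen n   -- the arrows η
  | k : Fin (n + 2) → CGen n   -- the arrows ξ

variable (F : Type) [Field F] (n : ℕ)

open FreeAlgebra

abbrev fE (i : Fin (n + 3)) : FreeAlgebra F (CGen n) := ι F (CGen.e i)
abbrev fH (t : Fin (n + 2)) : FreeAlgebra F (CGen n) := ι F (CGen.h t)
abbrev fK (t : Fin (n + 2)) : FreeAlgebra F (CGen n) := ι F (CGen.k t)

/-- The defining relations of `c`. -/
inductive CRel : FreeAlgebra F (CGen n) → FreeAlgebra F (CGen n) → Prop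
  | ee (i j : Fin (n + 3)) :
      CRel (fE F n i * fE F n j) (if i = j then fE F n i else 0)
  | esum : CRel (∑ i : Fin (n + 3), fE F n i) 1
  /-- `η t` is an arrow from vertex `t.castSucc` to vertex `t.succ` -/
  | eh (t : Fin (n + 2)) : CRel (fE F n t.succ * fH F n t * fE F n t.castSucc) (fH F n t)
  /-- `ξ t` is an arrow from vertex `t.succ` to vertex `t.castSucc` -/
  | ek (t : Fin (n + 2)) : CRel (fE F n t.castSucc * fK F n t * fE F n t.succ) (fK F n t)
  /-- `η_{p-1} ξ_{p-1} = 0` -/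
  | top : CRel (fK F n (Fin.last (n + 1)) * fH F n (Fin.last (n + 1))) 0
  /-- `ξ_{m+1} ξ_m = 0` -/
  | kk (t : Fin (n + 1)) : CRel (fK F n t.castSucc * fK F n t.succ) 0
  /-- `η_m η_{m+1} = 0` -/
  | hh (t : Fin (n + 1)) : CRel (fH F n t.succ * fH F n t.castSucc) 0
  /-- `ξ_m η_m + η_{m+1} ξ_{m+1} = 0` -/
  | hk (t : Fin (n + 1)) :
      CRel (fH F n t.castSucc * fK F n t.castSucc + fK F n t.succ * fH F n t.succ) 0

/-- The algebra `c`. -/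
abbrev CAlg := RingQuot (CRel F n)

noncomputable def mkC : FreeAlgebra F (CGen n) →ₐ[F] CAlg F n := RingQuot.mkAlgHom F _

noncomputable def hC (t : Fin (n + 2)) : CAlg F n := mkC F n (fH F n t)
noncomputable def kC (t : Fin (n + 2)) : CAlg F n := mkC F n (fK F n t)

/-- `c²`: the span of the length-two paths (these are the loops `ξη` and `ηξ`;
all other products of two arrows vanish in `c`). -/
noncomputable def csq : Submodule F (CAlg F n) :=
  Submodule.span F
    (Set.range (fun t => hC F n t * kC F n t) ∪ Set.range (fun t => kC F n t * hC F n t))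

end Stmt7

/-!
The vertex idempotents `e_i` are orthogonal with sum `1`, and the relations kill
every path of length three, so `c` is spanned by the vertices, the arrows and the loops
`ηξ`, `ξη`; these loops commute with all generators, hence `c² ⊆ Z(c)`. A central `x` equals
`∑ e_i x e_i`, and `e_i c e_i` is spanned by `e_i` and loops, so `x = ∑ a_i e_i + y` with
`y ∈ c²`. Commuting `∑ a_i e_i` past the arrow `η_t` gives `a_t η_t = a_{t+1} η_t`, and
`η_t ≠ 0` (it acts nontrivially on the representation on `F^p` in which `η_t` is the only
nonzero arrow), so the `a_i` are all equal. That representation kills `c²` but not `1`, which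
makes the sum direct.
-/

theorem Submodule.span_eq_top_of_forall_mul_mem {R A : Type*} [CommSemiring R] [Semiring A]
    [Algebra R A] {g s : Set A} (hg : Algebra.adjoin R g = ⊤) (h1 : (1 : A) ∈ span R s)
    (hmul : ∀ a ∈ g, ∀ x ∈ s, a * x ∈ span R s) : span R s = ⊤ := by
  have hstab (a : A) : ∀ x ∈ span R s, a * x ∈ span R s := by
    have ha : a ∈ Algebra.adjoin R g := hg ▸ Algebra.mem_top
    induction ha using Algebra.adjoin_induction with
    | mem a ha =>
      intro x hx
      induction hx using span_induction with
      | mem x hx => exact hmul a ha x hx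
      | zero => rw [mul_zero]; exact zero_mem _
      | add x y _ _ hx hy => rw [mul_add]; exact add_mem hx hy
      | smul r x _ hx => rw [mul_smul_comm]; exact smul_mem _ r hx
    | algebraMap r => intro x hx; rw [← Algebra.smul_def]; exact smul_mem _ r hx
    | add a b _ _ ha hb => intro x hx; rw [add_mul]; exact add_mem (ha x hx) (hb x hx)
    | mul a b _ _ ha hb => intro x hx; rw [mul_assoc]; exact ha _ (hb x hx)
  exact eq_top_iff'.2 fun a => mul_one a ▸ hstab a 1 h1

theorem sum_mul_mul_eq_of_forall_commute {ι R : Type*} [Fintype ι] [Semiring R] {e : ι → R}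
    (he : ∀ i, e i * e i = e i) (hsum : ∑ i, e i = 1) {x : R} (hx : ∀ y, Commute y x) :
    ∑ i, e i * x * e i = x := by
  calc ∑ i, e i * x * e i = ∑ i, x * e i := by
        refine Finset.sum_congr rfl fun i _ => ?_
        rw [(hx _).eq, mul_assoc, he]
    _ = x := by rw [← Finset.mul_sum, hsum, mul_one]

theorem Fin.exists_castSucc_eq_and_succ_eq_of_castSucc_eq_succ {n : ℕ} {s t : Fin (n + 2)}
    (h : s.castSucc = t.succ) : ∃ u : Fin (n + 1), t = u.castSucc ∧ s = u.succ := by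
  cases t using Fin.lastCases with
  | last => exact absurd (h.trans (Fin.succ_last _)) (Fin.castSucc_ne_last s)
  | cast u => exact ⟨u, rfl, Fin.castSucc_injective _ (h.trans (Fin.succ_castSucc u))⟩

namespace Stmt7

variable {F : Type} [Field F] {n : ℕ}

noncomputable def eC (F : Type) [Field F] (n : ℕ) (i : Fin (n + 3)) : CAlg F n :=
  mkC F n (fE F n i)

local notation "ε" => eC F n
local notation "η" => hC F n
local notation "ξ" => kC F n

theorem mkC_eq_of_rel {x y : FreeAlgebra F (CGen n)} (h : CRel F n x y) :
    mkC F n x = mkC F n y :=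
  RingQuot.mkAlgHom_rel F h

theorem eC_mul_eC (i j : Fin (n + 3)) : ε i * ε j = if i = j then ε i else 0 := by
  simpa [eC, apply_ite (mkC F n)] using mkC_eq_of_rel (CRel.ee (F := F) i j)

theorem eC_mul_self (i : Fin (n + 3)) : ε i * ε i = ε i := by
  rw [eC_mul_eC, if_pos rfl]

theorem sum_eC : ∑ i, ε i = 1 := by
  simpa [eC] using mkC_eq_of_rel (CRel.esum (F := F) (n := n))

theorem eC_mul_hC_mul_eC (t : Fin (n + 2)) : ε t.succ * η t * ε t.castSucc = η t := by
  simpa [eC, hC] using mkC_eq_of_rel (CRel.eh (F := F) t)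

theorem eC_mul_kC_mul_eC (t : Fin (n + 2)) : ε t.castSucc * ξ t * ε t.succ = ξ t := by
  simpa [eC, kC] using mkC_eq_of_rel (CRel.ek (F := F) t)

theorem kC_last_mul_hC_last : ξ (Fin.last (n + 1)) * η (Fin.last (n + 1)) = 0 := by
  simpa [kC, hC] using mkC_eq_of_rel (CRel.top (F := F) (n := n))

theorem kC_castSucc_mul_kC_succ (t : Fin (n + 1)) : ξ t.castSucc * ξ t.succ = 0 := by
  simpa [kC] using mkC_eq_of_rel (CRel.kk (F := F) t)

theorem hC_succ_mul_hC_castSucc (t : Fin (n + 1)) : η t.succ * η t.castSucc = 0 := by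
  simpa [hC] using mkC_eq_of_rel (CRel.hh (F := F) t)

theorem hC_mul_kC_add_kC_mul_hC (t : Fin (n + 1)) :
    η t.castSucc * ξ t.castSucc + ξ t.succ * η t.succ = 0 := by
  simpa [hC, kC] using mkC_eq_of_rel (CRel.hk (F := F) t)

theorem eC_succ_mul_hC (t : Fin (n + 2)) : ε t.succ * η t = η t := by
  rw [← eC_mul_hC_mul_eC, ← mul_assoc, ← mul_assoc, eC_mul_self]

theorem hC_mul_eC_castSucc (t : Fin (n + 2)) : η t * ε t.castSucc = η t := by
  rw [← eC_mul_hC_mul_eC, mul_assoc, eC_mul_self]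

theorem eC_castSucc_mul_kC (t : Fin (n + 2)) : ε t.castSucc * ξ t = ξ t := by
  rw [← eC_mul_kC_mul_eC, ← mul_assoc, ← mul_assoc, eC_mul_self]

theorem kC_mul_eC_succ (t : Fin (n + 2)) : ξ t * ε t.succ = ξ t := by
  rw [← eC_mul_kC_mul_eC, mul_assoc, eC_mul_self]

theorem eC_mul_hC (i : Fin (n + 3)) (t : Fin (n + 2)) :
    ε i * η t = if i = t.succ then η t else 0 := by
  rw [← eC_succ_mul_hC, ← mul_assoc, eC_mul_eC]
  split_ifs with h <;> simp [h]

theorem hC_mul_eC (t : Fin (n + 2)) (i : Fin (n + 3)) :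
    η t * ε i = if i = t.castSucc then η t else 0 := by
  rw [← hC_mul_eC_castSucc, mul_assoc, eC_mul_eC]
  split_ifs <;> simp_all

theorem eC_mul_kC (i : Fin (n + 3)) (t : Fin (n + 2)) :
    ε i * ξ t = if i = t.castSucc then ξ t else 0 := by
  rw [← eC_castSucc_mul_kC, ← mul_assoc, eC_mul_eC]
  split_ifs with h <;> simp [h]

theorem kC_mul_eC (t : Fin (n + 2)) (i : Fin (n + 3)) :
    ξ t * ε i = if i = t.succ then ξ t else 0 := by
  rw [← kC_mul_eC_succ, mul_assoc, eC_mul_eC]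
  split_ifs <;> simp_all

theorem hC_mul_hC (s t : Fin (n + 2)) : η s * η t = 0 := by
  by_cases h : s.castSucc = t.succ
  · obtain ⟨u, rfl, rfl⟩ := Fin.exists_castSucc_eq_and_succ_eq_of_castSucc_eq_succ h
    exact hC_succ_mul_hC_castSucc u
  · rw [← hC_mul_eC_castSucc s, ← eC_succ_mul_hC t, mul_assoc, ← mul_assoc (ε _), eC_mul_eC,
      if_neg h, zero_mul, mul_zero]

theorem kC_mul_kC (s t : Fin (n + 2)) : ξ s * ξ t = 0 := by
  by_cases h : t.castSucc = s.succ
  · obtain ⟨u, rfl, rfl⟩ := Fin.exists_castSucc_eq_and_succ_eq_of_castSucc_eq_succ h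
    exact kC_castSucc_mul_kC_succ u
  · rw [← kC_mul_eC_succ s, ← eC_castSucc_mul_kC t, mul_assoc, ← mul_assoc (ε _), eC_mul_eC,
      if_neg (Ne.symm h), zero_mul, mul_zero]

theorem hC_mul_kC_of_ne {s t : Fin (n + 2)} (h : s ≠ t) : η s * ξ t = 0 := by
  rw [← hC_mul_eC_castSucc s, ← eC_castSucc_mul_kC t, mul_assoc, ← mul_assoc (ε _), eC_mul_eC,
    if_neg (Fin.castSucc_injective _ |>.ne h), zero_mul, mul_zero]

theorem kC_mul_hC_of_ne {s t : Fin (n + 2)} (h : s ≠ t) : ξ s * η t = 0 := by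
  rw [← kC_mul_eC_succ s, ← eC_succ_mul_hC t, mul_assoc, ← mul_assoc (ε _), eC_mul_eC,
    if_neg (Fin.succ_injective _ |>.ne h), zero_mul, mul_zero]

theorem hC_mul_kC_mul_hC_self (t : Fin (n + 2)) : η t * ξ t * η t = 0 := by
  cases t using Fin.lastCases with
  | last => rw [mul_assoc, kC_last_mul_hC_last, mul_zero]
  | cast u =>
    have := congrArg (· * η u.castSucc) (hC_mul_kC_add_kC_mul_hC u)
    simpa only [add_mul, mul_assoc (ξ u.succ), hC_mul_hC, mul_zero, add_zero, zero_mul] using this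

theorem kC_mul_hC_mul_kC_self (t : Fin (n + 2)) : ξ t * η t * ξ t = 0 := by
  cases t using Fin.lastCases with
  | last => rw [kC_last_mul_hC_last, zero_mul]
  | cast u =>
    have := congrArg (ξ u.castSucc * ·) (hC_mul_kC_add_kC_mul_hC u)
    simpa only [mul_add, ← mul_assoc, kC_mul_kC, zero_mul, add_zero, mul_zero] using this

theorem hC_mul_kC_mul_hC (s t u : Fin (n + 2)) : η s * ξ t * η u = 0 := by
  obtain rfl | hst := eq_or_ne s t
  · obtain rfl | hsu := eq_or_ne s u
    · exact hC_mul_kC_mul_hC_self s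
    · rw [mul_assoc, kC_mul_hC_of_ne hsu, mul_zero]
  · rw [hC_mul_kC_of_ne hst, zero_mul]

theorem kC_mul_hC_mul_kC (s t u : Fin (n + 2)) : ξ s * η t * ξ u = 0 := by
  obtain rfl | hst := eq_or_ne s t
  · obtain rfl | hsu := eq_or_ne s u
    · exact kC_mul_hC_mul_kC_self s
    · rw [mul_assoc, hC_mul_kC_of_ne hsu, mul_zero]
  · rw [kC_mul_hC_of_ne hst, zero_mul]

def loops (F : Type) [Field F] (n : ℕ) : Set (CAlg F n) :=
  Set.range (fun t => hC F n t * kC F n t) ∪ Set.range (fun t => kC F n t * hC F n t)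

def paths (F : Type) [Field F] (n : ℕ) : Set (CAlg F n) :=
  Set.range (eC F n) ∪ Set.range (hC F n) ∪ Set.range (kC F n) ∪ loops F n

theorem csq_eq_span_loops : csq F n = Submodule.span F (loops F n) := rfl

theorem adjoin_eC_hC_kC_eq_top :
    Algebra.adjoin F (Set.range (eC F n) ∪ Set.range (hC F n) ∪ Set.range (kC F n)) = ⊤ := by
  have hsurj : Function.Surjective (mkC F n) := RingQuot.mkAlgHom_surjective F _
  rw [eq_top_iff, ← (AlgHom.range_eq_top _).2 hsurj, ← Algebra.map_top,
    ← FreeAlgebra.adjoin_range_ι, AlgHom.map_adjoin]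
  refine Algebra.adjoin_mono ?_
  rintro _ ⟨_, ⟨i | t | t, rfl⟩, rfl⟩
  exacts [Or.inl (Or.inl ⟨i, rfl⟩), Or.inl (Or.inr ⟨t, rfl⟩), Or.inr ⟨t, rfl⟩]

theorem span_paths_eq_top : Submodule.span F (paths F n) = ⊤ := by
  refine Submodule.span_eq_top_of_forall_mul_mem adjoin_eC_hC_kC_eq_top ?_ ?_
  · rw [← sum_eC]
    exact Submodule.sum_mem _ fun i _ => Submodule.subset_span (by simp [paths])
  · rintro _ ((⟨i, rfl⟩ | ⟨t, rfl⟩) | ⟨t, rfl⟩) x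
      (((⟨j, rfl⟩ | ⟨s, rfl⟩) | ⟨s, rfl⟩) | (⟨s, rfl⟩ | ⟨s, rfl⟩))
    all_goals
      try simp only [← mul_assoc, eC_mul_eC, eC_mul_hC, eC_mul_kC, hC_mul_eC, kC_mul_eC, hC_mul_hC,
        kC_mul_kC, hC_mul_kC_mul_hC, kC_mul_hC_mul_kC, ite_mul, zero_mul]
      (try split_ifs) <;> first
        | exact zero_mem _
        | (apply Submodule.subset_span; simp [paths, loops]; done)
        | obtain rfl | hts := eq_or_ne t s
          · apply Submodule.subset_span; simp [paths, loops]
          · simp [hC_mul_kC_of_ne hts, kC_mul_hC_of_ne hts]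

theorem mem_center_of_forall_commute {x : CAlg F n} (he : ∀ i, Commute (ε i) x)
    (hh : ∀ t, Commute (η t) x) (hk : ∀ t, Commute (ξ t) x) :
    x ∈ Subalgebra.center F (CAlg F n) := by
  have hy (y : CAlg F n) : y ∈ Algebra.adjoin F (Set.range ε ∪ Set.range η ∪ Set.range ξ) :=
    adjoin_eC_hC_kC_eq_top (F := F) (n := n) ▸ Algebra.mem_top
  refine Subalgebra.mem_center_iff.2 fun y =>
    (Algebra.commute_of_mem_adjoin_of_forall_mem_commute (a := x) (hy y) ?_).eq.symm
  rintro _ ((⟨i, rfl⟩ | ⟨t, rfl⟩) | ⟨t, rfl⟩)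
  exacts [(he i).symm, (hh t).symm, (hk t).symm]

theorem hC_mul_kC_mem_center (t : Fin (n + 2)) :
    η t * ξ t ∈ Subalgebra.center F (CAlg F n) := by
  refine mem_center_of_forall_commute (fun i => ?_) (fun s => ?_) (fun s => ?_) <;>
    simp only [Commute, SemiconjBy]
  · rw [← mul_assoc, mul_assoc _ (ξ t), eC_mul_hC, kC_mul_eC, ite_mul, zero_mul, mul_ite, mul_zero]
  · rw [← mul_assoc, hC_mul_hC, zero_mul, hC_mul_kC_mul_hC]
  · rw [← mul_assoc, kC_mul_hC_mul_kC, mul_assoc, kC_mul_kC, mul_zero]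

theorem kC_mul_hC_mem_center (t : Fin (n + 2)) :
    ξ t * η t ∈ Subalgebra.center F (CAlg F n) := by
  refine mem_center_of_forall_commute (fun i => ?_) (fun s => ?_) (fun s => ?_) <;>
    simp only [Commute, SemiconjBy]
  · rw [← mul_assoc, mul_assoc _ (η t), eC_mul_kC, hC_mul_eC, ite_mul, zero_mul, mul_ite, mul_zero]
  · rw [← mul_assoc, hC_mul_kC_mul_hC, mul_assoc, hC_mul_hC, mul_zero]
  · rw [← mul_assoc, kC_mul_kC, zero_mul, kC_mul_hC_mul_kC]

theorem csq_le_center :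
    csq F n ≤ Subalgebra.toSubmodule (Subalgebra.center F (CAlg F n)) := by
  rw [csq_eq_span_loops, Submodule.span_le]
  rintro _ (⟨t, rfl⟩ | ⟨t, rfl⟩)
  exacts [hC_mul_kC_mem_center t, kC_mul_hC_mem_center t]

theorem eC_mul_mul_eC_mem (i : Fin (n + 3)) (x : CAlg F n) :
    ε i * x * ε i ∈ Submodule.span F (Set.range (eC F n)) ⊔ csq F n := by
  have hx : x ∈ Submodule.span F (paths F n) := span_paths_eq_top (F := F) ▸ Submodule.mem_top
  induction hx using Submodule.span_induction with
  | mem x hx =>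
    rcases hx with (((⟨j, rfl⟩ | ⟨t, rfl⟩) | ⟨t, rfl⟩) | (⟨t, rfl⟩ | ⟨t, rfl⟩)) <;>
      simp only [← mul_assoc, eC_mul_eC, eC_mul_hC, eC_mul_kC, ite_mul, zero_mul, if_true] <;>
      split_ifs with h <;> try subst h
    all_goals
      try simp only [mul_assoc, hC_mul_eC, kC_mul_eC, Fin.castSucc_lt_succ.ne,
        Fin.castSucc_lt_succ.ne', if_true, if_false]
      first
        | exact zero_mem _
        | exact Submodule.mem_sup_left (Submodule.subset_span ⟨_, rfl⟩)
        | exact Submodule.mem_sup_right (Submodule.subset_span (Or.inl ⟨_, rfl⟩))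
        | exact Submodule.mem_sup_right (Submodule.subset_span (Or.inr ⟨_, rfl⟩))
  | zero => simp
  | add x y _ _ hx hy => rw [mul_add, add_mul]; exact add_mem hx hy
  | smul r x _ hx => rw [mul_smul_comm, smul_mul_assoc]; exact Submodule.smul_mem _ r hx

theorem center_le_span_eC_sup_csq :
    Subalgebra.toSubmodule (Subalgebra.center F (CAlg F n))
      ≤ Submodule.span F (Set.range (eC F n)) ⊔ csq F n := by
  intro x hx
  rw [← sum_mul_mul_eq_of_forall_commute eC_mul_self sum_eC
    (Subalgebra.mem_center_iff.1 (show x ∈ Subalgebra.center F (CAlg F n) from hx))]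
  exact Submodule.sum_mem _ fun i _ => eC_mul_mul_eC_mem i x

noncomputable def arrowRepGen (F : Type) [Field F] (t : Fin (n + 2)) :
    CGen n → Matrix (Fin (n + 3)) (Fin (n + 3)) F
  | .e i => Matrix.single i i 1
  | .h s => if s = t then Matrix.single t.succ t.castSucc 1 else 0
  | .k _ => 0

theorem arrowRepGen_rel (t : Fin (n + 2)) ⦃x y : FreeAlgebra F (CGen n)⦄ (r : CRel F n x y) :
    FreeAlgebra.lift F (arrowRepGen F t) x = FreeAlgebra.lift F (arrowRepGen F t) y := by
  cases r <;> simp [arrowRepGen, apply_ite (FreeAlgebra.lift F (arrowRepGen F t))]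
  case ee i j =>
    obtain rfl | hij := eq_or_ne i j
    · simp
    · simp [hij]
  case esum => exact Matrix.sum_single_one
  case eh s =>
    split_ifs with hst
    · subst hst; simp
    · rfl
  case hh s => exact fun h₁ h₂ => absurd (h₁.trans h₂.symm) Fin.castSucc_lt_succ.ne

noncomputable def arrowRep (t : Fin (n + 2)) :
    CAlg F n →ₐ[F] Matrix (Fin (n + 3)) (Fin (n + 3)) F :=
  RingQuot.liftAlgHom F ⟨FreeAlgebra.lift F (arrowRepGen F t), arrowRepGen_rel t⟩

theorem arrowRep_mkC_ι (t : Fin (n + 2)) (g : CGen n) :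
    arrowRep t (mkC F n (FreeAlgebra.ι F g)) = arrowRepGen F t g := by
  rw [arrowRep, mkC, RingQuot.liftAlgHom_mkAlgHom_apply, FreeAlgebra.lift_ι_apply]

theorem hC_ne_zero (t : Fin (n + 2)) : η t ≠ 0 := by
  intro h
  have := congrArg (arrowRep t) h
  rw [hC, arrowRep_mkC_ι, map_zero, arrowRepGen, if_pos rfl] at this
  simpa using congrFun (congrFun this t.succ) t.castSucc

theorem arrowRep_csq (t : Fin (n + 2)) {x : CAlg F n} (hx : x ∈ csq F n) : arrowRep t x = 0 := by
  rw [csq_eq_span_loops] at hx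
  induction hx using Submodule.span_induction with
  | mem x hx =>
    rcases hx with ⟨s, rfl⟩ | ⟨s, rfl⟩ <;> simp [kC, arrowRep_mkC_ι, arrowRepGen]
  | zero => exact map_zero _
  | add x y _ _ hx hy => rw [map_add, hx, hy, add_zero]
  | smul r x _ hx => rw [map_smul, hx, smul_zero]

theorem eq_zero_of_smul_one_mem_csq {r : F} (h : r • (1 : CAlg F n) ∈ csq F n) : r = 0 := by
  have := arrowRep_csq 0 h
  rw [map_smul, map_one] at this
  simpa using this

theorem sum_smul_eC_eq_smul_one {a : Fin (n + 3) → F}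
    (h : ∑ i, a i • ε i ∈ Subalgebra.center F (CAlg F n)) : ∑ i, a i • ε i = a 0 • 1 := by
  have hstep (t : Fin (n + 2)) : a t.castSucc = a t.succ := by
    have hcomm := Subalgebra.mem_center_iff.1 h (η t)
    simp only [Finset.mul_sum, Finset.sum_mul, mul_smul_comm, smul_mul_assoc, hC_mul_eC,
      eC_mul_hC, smul_ite, smul_zero, Finset.sum_ite_eq', Finset.mem_univ, if_true] at hcomm
    exact smul_left_injective F (hC_ne_zero t) hcomm
  have hconst (i : Fin (n + 3)) : a i = a 0 := by
    induction i using Fin.induction with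
    | zero => rfl
    | succ j ih => rw [← hstep j]; exact ih
  simp only [hconst, ← Finset.smul_sum, sum_eC]

end Stmt7

open Stmt7 in
theorem stmt7_general (F : Type) [Field F] (n : ℕ) :
    Subalgebra.toSubmodule (Subalgebra.center F (CAlg F n))
      = Submodule.span F {(1 : CAlg F n)} ⊔ csq F n ∧
    Disjoint (Submodule.span F {(1 : CAlg F n)}) (csq F n) := by
  refine ⟨le_antisymm (fun x hx => ?_) (sup_le ?_ csq_le_center), ?_⟩
  · obtain ⟨_, ha, y, hy, rfl⟩ := Submodule.mem_sup.1 (center_le_span_eC_sup_csq hx)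
    obtain ⟨a, rfl⟩ := (Submodule.mem_span_range_iff_exists_fun F).1 ha
    have hcenter : ∑ i, a i • eC F n i ∈ Subalgebra.center F (CAlg F n) := by
      simpa using sub_mem hx (csq_le_center hy)
    rw [sum_smul_eC_eq_smul_one hcenter]
    exact Submodule.add_mem_sup (Submodule.smul_mem _ _ (Submodule.mem_span_singleton_self 1)) hy
  · rw [Submodule.span_le, Set.singleton_subset_iff]
    exact Subalgebra.one_mem _
  · refine Submodule.disjoint_def.2 fun x h1 hcsq => ?_
    obtain ⟨r, rfl⟩ := Submodule.mem_span_singleton.1 h1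
    rw [eq_zero_of_smul_one_mem_csq hcsq, zero_smul]

open Stmt7 in
theorem stmt7 (F : Type) [Field F] [IsAlgClosed F] (p n : ℕ) (hpn : p = n + 3)
    [Fact (Nat.Prime p)] [CharP F p] :
    Subalgebra.toSubmodule (Subalgebra.center F (CAlg F n))
      = Submodule.span F {(1 : CAlg F n)} ⊔ csq F n ∧
    Disjoint (Submodule.span F {(1 : CAlg F n)}) (csq F n) :=
  stmt7_general F n
end
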